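/- arXiv:2309.00467 — 2 statements merged into one kernel-verified Lean document; each statement's English description precedes it below -/
import Mathlib

section
/- Let u,v,w ∈ S_n and let 1≤i<n with ℓ(s_i u)<ℓ(u). Then c_{s_i u, v}^w = −((1+βy_i)/(y_i−y_{i+1}))·c_{u,v}^w + ((1+βy_{i+1})/(y_i−y_{i+1}))·c_{u,v}^w|_{y_i↔y_{i+1}}. -/
open MvPolynomial

noncomputable section

namespace BPDPuzzle

/-- `x ⊖ y = (x - y)/(1 + β·y)`. -/
def ominus {K : Type*} [Field K] (β a b : K) : K := (a - b) / (1 + β * b)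

/-- A permutation of `ℕ` lying in `S_∞`, i.e. fixing all sufficiently large integers. -/
def FinPerm (w : Equiv.Perm ℕ) : Prop := ∃ N : ℕ, ∀ j, N ≤ j → w j = j

/-- A permutation of `ℕ` lying in `S_n` (0-based positions `0, …, n-1`). -/
def InSn (n : ℕ) (w : Equiv.Perm ℕ) : Prop := ∀ j, n ≤ j → w j = j

/-- Coxeter length: the number of inversions. -/
def len (w : Equiv.Perm ℕ) : ℕ := Set.ncard {p : ℕ × ℕ | p.1 < p.2 ∧ w p.2 < w p.1}

/-- The simple transposition `s_i`, exchanging the (0-based) positions `i` and `i+1`. -/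
def sTr (i : ℕ) : Equiv.Perm ℕ := Equiv.swap i (i + 1)

/-- `u` and `v` have separated descents at position `k`, i.e.
`maxdes(u) ≤ k ≤ mindes(v)` (in 0-based conventions: `u` has no descent at any
0-based position `≥ k` and `v` has no descent at any 0-based position `< k-1`). -/
def SepDesc (k : ℕ) (u v : Equiv.Perm ℕ) : Prop :=
  (∀ i, k ≤ i → u i ≤ u (i + 1)) ∧ (∀ i, i + 1 < k → v i ≤ v (i + 1))

/-- The longest element `n ⋯ 2 1` of `S_n`, extended by the identity. -/
def revPerm (n : ℕ) : Equiv.Perm ℕ where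
  toFun j := if j < n then n - 1 - j else j
  invFun j := if j < n then n - 1 - j else j
  left_inv j := by dsimp only; split_ifs <;> omega
  right_inv j := by dsimp only; split_ifs <;> omega

/-- Exchange the values of a valuation at the indices `i` and `i+1`. -/
def swapVal {K : Type*} (t : ℕ → K) (i : ℕ) : ℕ → K :=
  fun j => if j = i then t (i + 1) else if j = i + 1 then t i else t j

/-- The defining properties of the family of double Grothendieck polynomials
`𝔊_w(x, t)`, viewed as a family of polynomials in the `x`-variables depending on
a valuation `t` of the second set of variables:  the initial condition
`𝔊_{n⋯21}(x,t) = ∏_{i+j≤n} (x_i ⊖ t_j)` together with the Demazure recursion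
`π_i 𝔊_w = 𝔊_{w s_i}` whenever `w(i) > w(i+1)` (the latter written with the
denominator `x_i - x_{i+1}` cleared). -/
def GrothFamily {K : Type*} [Field K] (β : K)
    (G : (ℕ → K) → Equiv.Perm ℕ → MvPolynomial ℕ K) : Prop :=
  ∀ t : ℕ → K, (∀ j, 1 + β * t j ≠ 0) →
    (∀ n : ℕ, G t (revPerm n) =
      ∏ i ∈ Finset.range n, ∏ j ∈ Finset.range (n - 1 - i),
        C ((1 + β * t j)⁻¹) * (X i - C (t j))) ∧
    (∀ (w : Equiv.Perm ℕ) (i : ℕ), w (i + 1) < w i →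
      (X i - X (i + 1)) * G t (w * sTr i) =
        (1 + C β * X (i + 1)) * G t w
          - (1 + C β * X i) * rename ⇑(Equiv.swap i (i + 1)) (G t w))

/-- The defining property of the structure constants `c_{u,v}^w(t,y)`:
`𝔊_u(x,y) · 𝔊_v(x,t) = Σ_w c_{u,v}^w(t,y) · 𝔊_w(x,t)`, the (finitely supported)
sum ranging over the permutations `w ∈ S_∞`. -/
def StructConsts {K : Type*} [Field K] (β : K)
    (G : (ℕ → K) → Equiv.Perm ℕ → MvPolynomial ℕ K)
    (c : (ℕ → K) → (ℕ → K) → Equiv.Perm ℕ → Equiv.Perm ℕ → Equiv.Perm ℕ → K) : Prop :=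
  ∀ t y : ℕ → K, (∀ j, 1 + β * t j ≠ 0) → (∀ j, 1 + β * y j ≠ 0) →
    ∀ u v : Equiv.Perm ℕ, FinPerm u → FinPerm v →
      {w : Equiv.Perm ℕ | c t y u v w ≠ 0}.Finite ∧
      (∀ w, ¬ FinPerm w → c t y u v w = 0) ∧
      G y u * G t v = ∑ᶠ w : Equiv.Perm ℕ, C (c t y u v w) * G t w

/-! ### The lattice model / pipe puzzles -/

/-- A state of the `n × n` lattice model: labels in `{0, …, n}` on all horizontal
and vertical (half-)edges.  `sst.1 i j` is the `j`-th horizontal (half-)edge of row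
`i` (`j = 0` being the left boundary and `j = n` the right boundary), and
`sst.2 i j` is the `i`-th vertical (half-)edge of column `j` (`i = 0` the top
boundary, `i = n` the bottom boundary). -/
abbrev GridState (n : ℕ) : Type :=
  (Fin n → Fin (n + 1) → Fin (n + 1)) × (Fin (n + 1) → Fin n → Fin (n + 1))

/-- The label on the north edge of the tile in row `i`, column `j`. -/
def labN {n : ℕ} (sst : GridState n) (i j : Fin n) : ℕ := (sst.2 i.castSucc j : ℕ)
/-- The label on the east edge of the tile in row `i`, column `j`. -/
def labE {n : ℕ} (sst : GridState n) (i j : Fin n) : ℕ := (sst.1 i j.succ : ℕ)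
/-- The label on the west edge of the tile in row `i`, column `j`. -/
def labW {n : ℕ} (sst : GridState n) (i j : Fin n) : ℕ := (sst.1 i j.castSucc : ℕ)
/-- The label on the south edge of the tile in row `i`, column `j`. -/
def labS {n : ℕ} (sst : GridState n) (i j : Fin n) : ℕ := (sst.2 i.succ j : ℕ)

/-- Boundary label `κ_u` on the right side (0-based row `i`, 1-based pipe labels). -/
def kappaLab (k : ℕ) (u : Equiv.Perm ℕ) (i : ℕ) : ℕ :=
  if u⁻¹ i < k then u⁻¹ i + 1 else 0

/-- Boundary label `θ_v` on the top side (0-based column `j`, 1-based pipe labels). -/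
def thetaLab (k : ℕ) (v : Equiv.Perm ℕ) (j : ℕ) : ℕ :=
  if k ≤ v⁻¹ j then v⁻¹ j + 1 else 0

/-- Boundary label `η_w` on the bottom side (0-based column `j`, 1-based pipe labels). -/
def etaLab (w : Equiv.Perm ℕ) (j : ℕ) : ℕ := w⁻¹ j + 1

/-- The boundary condition for pipe puzzles for `(u, v, w)`: left edges all `0`,
right edges `κ_u`, top edges `θ_v`, bottom edges `η_w`. -/
def BoundaryCond (n k : ℕ) (u v w : Equiv.Perm ℕ) (sst : GridState n) : Prop :=
  (∀ i : Fin n, (sst.1 i 0 : ℕ) = 0) ∧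
  (∀ i : Fin n, (sst.1 i (Fin.last n) : ℕ) = kappaLab k u (i : ℕ)) ∧
  (∀ j : Fin n, (sst.2 0 j : ℕ) = thetaLab k v (j : ℕ)) ∧
  (∀ j : Fin n, (sst.2 (Fin.last n) j : ℕ) = etaLab w (j : ℕ))

/-- The admissible local configurations (tiles) of a pipe puzzle, in terms of the
four edge labels `N, E, W, S` around a tile:  the empty tile, the vertical pipe,
the horizontal pipe, the crossing (with the horizontal pipe carrying the smaller
label), the two elbows `⌟` and `⌐` (labels `≤ k` coming from the right side,
labels `> k` from the top side), and the bumping tiles (with the stated label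
restrictions). -/
def LAdm (k N E W S : ℕ) : Prop :=
  (N = 0 ∧ E = 0 ∧ W = 0 ∧ S = 0) ∨
  (E = 0 ∧ W = 0 ∧ 0 < N ∧ N = S) ∨
  (N = 0 ∧ S = 0 ∧ 0 < E ∧ E = W) ∨
  (0 < E ∧ E = W ∧ E < N ∧ N = S) ∨
  (E = 0 ∧ S = 0 ∧ 0 < N ∧ N = W ∧ N ≤ k) ∨
  (E = 0 ∧ S = 0 ∧ N = W ∧ k < N) ∨
  (N = 0 ∧ W = 0 ∧ 0 < E ∧ E = S ∧ E ≤ k) ∨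
  (N = 0 ∧ W = 0 ∧ E = S ∧ k < E) ∨
  (0 < E ∧ E = S ∧ E < N ∧ N = W ∧ N ≤ k) ∨
  (k < E ∧ E = S ∧ E < N ∧ N = W) ∨
  (0 < N ∧ N = W ∧ N ≤ k ∧ E = S ∧ k < E)

/-- The admissible local configurations of a Schubert pipe puzzle (no bumping
tiles; crossings have the horizontal pipe carrying the smaller label). -/
def LAdm0 (N E W S : ℕ) : Prop :=
  (N = 0 ∧ E = 0 ∧ W = 0 ∧ S = 0) ∨
  (E = 0 ∧ W = 0 ∧ 0 < N ∧ N = S) ∨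
  (N = 0 ∧ S = 0 ∧ 0 < E ∧ E = W) ∨
  (0 < E ∧ E = W ∧ E < N ∧ N = S) ∨
  (E = 0 ∧ S = 0 ∧ 0 < N ∧ N = W) ∨
  (N = 0 ∧ W = 0 ∧ 0 < E ∧ E = S)

/-- The vertex weight `L(x; N, E, W, S)` of the lattice model (equivalently, the
weight of the corresponding pipe-puzzle tile), with spectral parameter `x`. -/
def Lwt {K : Type*} [Field K] (β : K) (k : ℕ) (x : K) (N E W S : ℕ) : K :=
  if N = 0 ∧ E = 0 ∧ W = 0 ∧ S = 0 then x
  else if E = 0 ∧ W = 0 ∧ 0 < N ∧ N = S then 1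
  else if N = 0 ∧ S = 0 ∧ 0 < E ∧ E = W then 1
  else if 0 < E ∧ E = W ∧ E < N ∧ N = S then 1
  else if E = 0 ∧ S = 0 ∧ 0 < N ∧ N = W ∧ N ≤ k then 1 + β * x
  else if E = 0 ∧ S = 0 ∧ N = W ∧ k < N then 1
  else if N = 0 ∧ W = 0 ∧ 0 < E ∧ E = S ∧ E ≤ k then 1
  else if N = 0 ∧ W = 0 ∧ E = S ∧ k < E then 1 + β * x
  else if 0 < E ∧ E = S ∧ E < N ∧ N = W ∧ N ≤ k then β
  else if k < E ∧ E = S ∧ E < N ∧ N = W then β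
  else if 0 < N ∧ N = W ∧ N ≤ k ∧ E = S ∧ k < E then β * (1 + β * x)
  else 0

/-- The set of pipe puzzles for `(u, v, w)` (with separated-descent parameter `k`),
encoded as admissible states of the lattice model. -/
def PP (n k : ℕ) (u v w : Equiv.Perm ℕ) : Set (GridState n) :=
  {sst | BoundaryCond n k u v w sst ∧
    ∀ i j : Fin n, LAdm k (labN sst i j) (labE sst i j) (labW sst i j) (labS sst i j)}

/-- The set of Schubert pipe puzzles for `(u, v, w)`. -/
def PP0 (n k : ℕ) (u v w : Equiv.Perm ℕ) : Set (GridState n) :=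
  {sst | BoundaryCond n k u v w sst ∧
    ∀ i j : Fin n, LAdm0 (labN sst i j) (labE sst i j) (labW sst i j) (labS sst i j)}

/-- The weight `wt(π)` of a pipe puzzle: the product over all tiles, the tile in
row `i` and column `j` having spectral parameter `t_j ⊖ y_i`. -/
def stateWt {K : Type*} [Field K] (β : K) (k : ℕ) (t y : ℕ → K) {n : ℕ}
    (sst : GridState n) : K :=
  ∏ i : Fin n, ∏ j : Fin n,
    Lwt β k (ominus β (t (j : ℕ)) (y (i : ℕ)))
      (labN sst i j) (labE sst i j) (labW sst i j) (labS sst i j)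

/-- The Schubert weight `wt₀(π)`: the product of `t_j - y_i` over the positions
`(i, j)` of the empty tiles. -/
def stateWt0 {K : Type*} [Field K] (t y : ℕ → K) {n : ℕ} (sst : GridState n) : K :=
  ∏ i : Fin n, ∏ j : Fin n,
    if labN sst i j = 0 ∧ labE sst i j = 0 ∧ labW sst i j = 0 ∧ labS sst i j = 0
    then t (j : ℕ) - y (i : ℕ) else 1

/-!
The recursion is the coefficientwise form of the Demazure recursion of `𝔊_u(x, y)` in the
`y`-variables,
`(y_i - y_{i+1}) 𝔊_{s_i u}(x, y) = (1 + β y_{i+1}) 𝔊_u(x, s_i y) - (1 + β y_i) 𝔊_u(x, y)`: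
multiply it by `𝔊_v(x, t)`, expand the three products in the basis `𝔊_w(x, t)` and compare
coefficients.

The `y`-recursion is checked by hand for `u = w₀ = n⋯21`: there `w₀ s_j = s_i w₀` for
`i + j = n - 2`, and both `x_j ↔ x_{j+1}` and `y_i ↔ y_{i+1}` permute the factors of the staircase
`𝔊_{w₀} = ∏ (x_a ⊖ y_b)` other than `x_j ⊖ y_i`. It then passes from `u s_k` to `u` whenever
`u(k) < u(k+1)`, by applying `π_k`, which acts on the `x`-variables only.
-/

open Finset

lemma InSn.apply_lt {n : ℕ} {u : Equiv.Perm ℕ} (hu : InSn n u) {a : ℕ} (ha : a < n) :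
    u a < n := by
  by_contra! h
  have := u.injective (hu (u a) h)
  omega

lemma InSn.finPerm {n : ℕ} {u : Equiv.Perm ℕ} (hu : InSn n u) : FinPerm u := ⟨n, hu⟩

lemma InSn.mul {n : ℕ} {u v : Equiv.Perm ℕ} (hu : InSn n u) (hv : InSn n v) :
    InSn n (u * v) := fun j hj => by
  rw [Equiv.Perm.mul_apply, hv j hj, hu j hj]

lemma inSn_sTr {n i : ℕ} (hi : i + 1 < n) : InSn n (sTr i) := fun _ hj =>
  Equiv.swap_apply_of_ne_of_ne (by omega) (by omega)

lemma sTr_apply (i a : ℕ) : sTr i a = if a = i then i + 1 else if a = i + 1 then i else a :=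
  Equiv.swap_apply_def _ _ _

lemma revPerm_apply (n a : ℕ) : revPerm n a = if a < n then n - 1 - a else a := rfl

lemma InSn.finite_inversions {n : ℕ} {w : Equiv.Perm ℕ} (hw : InSn n w) :
    {p : ℕ × ℕ | p.1 < p.2 ∧ w p.2 < w p.1}.Finite := by
  refine ((Set.finite_Iio n).prod (Set.finite_Iio n)).subset ?_
  rintro ⟨a, b⟩ ⟨hab, hinv⟩
  dsimp only at hab hinv
  simp only [Set.mem_prod, Set.mem_Iio]
  by_contra! h
  rcases lt_or_ge a n with ha | ha
  · have := hw b (h ha)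
    have := hw.apply_lt ha
    omega
  · have := hw a ha
    have := hw b (by omega)
    omega

lemma InSn.inv_succ_lt_inv_of_len_sTr_mul_lt {n i : ℕ} {u : Equiv.Perm ℕ} (hu : InSn n u)
    (hi : i + 1 < n) (h : len (sTr i * u) < len u) : u⁻¹ (i + 1) < u⁻¹ i := by
  by_contra! hle
  have hlt : u⁻¹ i < u⁻¹ (i + 1) := lt_of_le_of_ne hle fun e => by
    have := u⁻¹.injective e
    omega
  have hsub : {p : ℕ × ℕ | p.1 < p.2 ∧ u p.2 < u p.1} ⊆
      {p : ℕ × ℕ | p.1 < p.2 ∧ (sTr i * u) p.2 < (sTr i * u) p.1} := by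
    rintro ⟨a, b⟩ ⟨hab, hinv⟩
    dsimp only at hab hinv
    refine ⟨hab, ?_⟩
    have : ¬(u b = i ∧ u a = i + 1) := by
      rintro ⟨hb, ha⟩
      rw [Equiv.Perm.inv_eq_iff_eq.mpr hb.symm, Equiv.Perm.inv_eq_iff_eq.mpr ha.symm] at hlt
      omega
    simp only [Equiv.Perm.mul_apply, sTr_apply]
    split_ifs <;> omega
  have := Set.ncard_le_ncard hsub ((inSn_sTr hi).mul hu).finite_inversions
  exact absurd h (not_lt.mpr this)

lemma InSn.eq_revPerm_of_forall_descent {n : ℕ} {u : Equiv.Perm ℕ} (hu : InSn n u)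
    (h : ∀ a, a + 1 < n → u (a + 1) < u a) : u = revPerm n := by
  have lower : ∀ d a, a < n → n ≤ a + d + 1 → n - 1 - a ≤ u a := by
    intro d
    induction d with
    | zero => intro a _ _; omega
    | succ d ih =>
      intro a ha had
      rcases Nat.lt_or_ge (a + 1) n with ha1 | ha1
      · have := ih (a + 1) ha1 (by omega)
        have := h a ha1
        omega
      · omega
  have upper : ∀ a, a < n → u a ≤ n - 1 - a := by
    intro a
    induction a with
    | zero => intro hn; have := hu.apply_lt hn; omega
    | succ a ih =>
      intro ha
      have := ih (by omega)
      have := h a ha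
      omega
  ext a
  rw [revPerm_apply]
  split_ifs with ha
  · have := lower n a ha (by omega)
    have := upper a ha
    omega
  · exact hu a (not_lt.mp ha)

lemma revPerm_mul_sTr (i j : ℕ) :
    revPerm (i + j + 2) * sTr j = sTr i * revPerm (i + j + 2) := by
  ext a
  simp only [Equiv.Perm.mul_apply, sTr_apply, revPerm_apply]
  split_ifs <;> omega

lemma sum_mul_apply_mul_sTr_lt {n j : ℕ} {u : Equiv.Perm ℕ} (hj : j + 1 < n)
    (hasc : u j < u (j + 1)) :
    ∑ a ∈ range n, a * (u * sTr j) a < ∑ a ∈ range n, a * u a := by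
  have hj₀ : j ∈ range n := mem_range.mpr (by omega)
  have hj₁ : j + 1 ∈ (range n).erase j := mem_erase.mpr ⟨by omega, mem_range.mpr hj⟩
  have split : ∀ F : ℕ → ℕ, ∑ a ∈ range n, F a
      = F j + F (j + 1) + ∑ a ∈ ((range n).erase j).erase (j + 1), F a := fun F => by
    rw [← add_sum_erase _ F hj₀, ← add_sum_erase _ F hj₁, add_assoc]
  have hrest : ∑ a ∈ ((range n).erase j).erase (j + 1), a * (u * sTr j) a
      = ∑ a ∈ ((range n).erase j).erase (j + 1), a * u a := by
    refine sum_congr rfl fun a ha => ?_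
    rw [mem_erase, mem_erase] at ha
    rw [Equiv.Perm.mul_apply, sTr, Equiv.swap_apply_of_ne_of_ne ha.2.1 ha.1]
  rw [split, split (fun a => a * u a), hrest, Equiv.Perm.mul_apply, Equiv.Perm.mul_apply, sTr,
    Equiv.swap_apply_left, Equiv.swap_apply_right]
  nlinarith

lemma inv_succ_lt_inv_mul_sTr {u : Equiv.Perm ℕ} {i k : ℕ} (hui : u⁻¹ (i + 1) < u⁻¹ i)
    (hasc : u k < u (k + 1)) : (u * sTr k)⁻¹ (i + 1) < (u * sTr k)⁻¹ i := by
  have : ¬(u⁻¹ (i + 1) = k ∧ u⁻¹ i = k + 1) := by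
    rintro ⟨h₁, h₂⟩
    rw [Equiv.Perm.inv_eq_iff_eq] at h₁ h₂
    omega
  simp only [mul_inv_rev, Equiv.Perm.mul_apply, sTr, Equiv.swap_inv, Equiv.swap_apply_def]
  split_ifs <;> omega

lemma sTr_mul_apply_lt_of_inv_succ_lt_inv {u : Equiv.Perm ℕ} {i k : ℕ}
    (hui : u⁻¹ (i + 1) < u⁻¹ i) (hasc : u k < u (k + 1)) :
    (sTr i * u) k < (sTr i * u) (k + 1) := by
  have : ¬(u k = i ∧ u (k + 1) = i + 1) := by
    rintro ⟨h₁, h₂⟩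
    rw [Equiv.Perm.inv_eq_iff_eq.mpr h₁.symm, Equiv.Perm.inv_eq_iff_eq.mpr h₂.symm] at hui
    omega
  simp only [Equiv.Perm.mul_apply, sTr_apply]
  split_ifs <;> omega

lemma _root_.Finset.prod_comp_equiv_eq_mul_prod_erase {α M : Type*} [CommMonoid M]
    [DecidableEq α] {s : Finset α} {a : α} (ha : a ∈ s) (e : α ≃ α)
    (he : ∀ x, x ∈ s.erase a ↔ e x ∈ s.erase a) (f : α → M) :
    ∏ x ∈ s, f (e x) = f (e a) * ∏ x ∈ s.erase a, f x := by
  rw [← mul_prod_erase s _ ha]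
  exact congrArg _ (prod_equiv e he fun _ _ => rfl)

lemma _root_.LinearIndependent.eq_zero_of_finsum_smul_eq_zero {ι R M : Type*} [Ring R]
    [AddCommGroup M] [Module R M] {P : ι → Prop} {b : ι → M}
    (hb : LinearIndependent R fun j : Subtype P => b j)
    {a : ι → R} (ha : (Function.support a).Finite) (haP : ∀ i, ¬ P i → a i = 0)
    (h : ∑ᶠ i, a i • b i = 0) (i : ι) : a i = 0 := by
  classical
  by_contra hai
  have hPi : P i := by_contra fun hPi => hai (haP i hPi)
  have hP : ∀ j ∈ ha.toFinset, P j := fun j hj =>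
    by_contra fun hPj => (ha.mem_toFinset.mp hj) (haP j hPj)
  refine hai (linearIndependent_iff'.mp hb (ha.toFinset.subtype P) (fun j => a j) ?_ ⟨i, hPi⟩
    (by simpa using hai))
  rw [sum_subtype_eq_sum_filter (fun j => a j • b j), filter_true_of_mem hP, ← h,
    finsum_eq_finsetSum_of_support_subset]
  rw [Set.Finite.coe_toFinset]
  exact Function.support_smul_subset_left _ _

lemma swapVal_eq_comp {K : Type*} (y : ℕ → K) (i : ℕ) :
    swapVal y i = y ∘ Equiv.swap i (i + 1) := by
  funext b
  simp only [swapVal, Function.comp_apply, Equiv.swap_apply_def]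
  split_ifs <;> simp_all

section Grothendieck

variable {K : Type*} [Field K]

lemma swapVal_ne_zero {β : K} {y : ℕ → K} (hy : ∀ j, 1 + β * y j ≠ 0) (i : ℕ) :
    ∀ j, 1 + β * swapVal y i j ≠ 0 := by
  rw [swapVal_eq_comp]
  exact fun j => hy _

lemma X_sub_X_succ_ne_zero (j : ℕ) : (X j - X (j + 1) : MvPolynomial ℕ K) ≠ 0 :=
  sub_ne_zero.mpr (X_injective.ne (by omega))

/-- The factor `x_a ⊖ y_b` of `𝔊_{n⋯21}(x, y)`. -/
def stairFactor (β : K) (y : ℕ → K) (p : ℕ × ℕ) : MvPolynomial ℕ K :=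
  C ((1 + β * y p.2)⁻¹) * (X p.1 - C (y p.2))

def stairSet (n : ℕ) : Finset (ℕ × ℕ) := (range n ×ˢ range n).filter fun p => p.1 + p.2 + 2 ≤ n

lemma mem_stairSet (n : ℕ) (p : ℕ × ℕ) :
    p ∈ stairSet n ↔ p.1 < n ∧ p.1 + p.2 + 2 ≤ n := by
  simp only [stairSet, mem_filter, mem_product, mem_range]
  omega

lemma mk_mem_stairSet (i j : ℕ) : (j, i) ∈ stairSet (i + j + 2) := by
  rw [mem_stairSet]
  omega

lemma prod_stairSet (β : K) (y : ℕ → K) (n : ℕ) :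
    ∏ a ∈ range n, ∏ b ∈ range (n - 1 - a), C ((1 + β * y b)⁻¹) * (X a - C (y b)) =
      ∏ p ∈ stairSet n, stairFactor β y p :=
  (prod_finset_product (stairSet n) (range n) (fun a => range (n - 1 - a)) (f := stairFactor β y)
    fun p => by simp only [mem_stairSet, mem_range]; omega).symm

lemma rename_stairFactor (β : K) (y : ℕ → K) (σ : ℕ → ℕ) (p : ℕ × ℕ) :
    rename σ (stairFactor β y p) = stairFactor β y (σ p.1, p.2) := by
  simp only [stairFactor, map_mul, map_sub, rename_C, rename_X]

lemma stairFactor_swapVal (β : K) (y : ℕ → K) (i : ℕ) (p : ℕ × ℕ) :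
    stairFactor β (swapVal y i) p = stairFactor β y (p.1, Equiv.swap i (i + 1) p.2) := by
  simp only [stairFactor, swapVal_eq_comp, Function.comp_apply]

lemma C_mul_stairFactor {β : K} {y : ℕ → K} {b : ℕ} (hy : 1 + β * y b ≠ 0) (a : ℕ) :
    C (1 + β * y b) * stairFactor β y (a, b) = X a - C (y b) := by
  rw [stairFactor, ← mul_assoc, ← map_mul, mul_inv_cancel₀ hy, map_one, one_mul]

/-- `π_a (x_a ⊖ y_b) = 1`. -/
lemma demazure_stairFactor {β : K} {y : ℕ → K} {b : ℕ} (hy : 1 + β * y b ≠ 0) (a : ℕ) :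
    (1 + C β * X (a + 1)) * stairFactor β y (a, b) - (1 + C β * X a) * stairFactor β y (a + 1, b) =
      X a - X (a + 1) := by
  have hinv : C (1 + β * y b)⁻¹ * C (1 + β * y b) = (1 : MvPolynomial ℕ K) := by
    rw [← map_mul, inv_mul_cancel₀ hy, map_one]
  simp only [stairFactor, map_add, map_mul, map_one] at hinv ⊢
  linear_combination (X a - X (a + 1)) * hinv

lemma rename_prod_stairSet (β : K) (y : ℕ → K) (i j : ℕ) :
    rename (Equiv.swap j (j + 1)) (∏ p ∈ stairSet (i + j + 2), stairFactor β y p) =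
      stairFactor β y (j + 1, i) *
        ∏ p ∈ (stairSet (i + j + 2)).erase (j, i), stairFactor β y p := by
  rw [map_prod]
  simp only [rename_stairFactor]
  refine (prod_comp_equiv_eq_mul_prod_erase (mk_mem_stairSet i j)
    ((Equiv.swap j (j + 1)).prodCongr (Equiv.refl ℕ)) ?_ (stairFactor β y)).trans ?_
  · rintro ⟨a, b⟩
    simp only [mem_erase, mem_stairSet, ne_eq, Prod.ext_iff, Equiv.prodCongr_apply, Prod.map,
      Equiv.refl_apply, Equiv.swap_apply_def]
    split_ifs <;> omega
  · simp only [Equiv.prodCongr_apply, Prod.map_apply, Equiv.refl_apply, Equiv.swap_apply_left]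

lemma prod_stairSet_swapVal (β : K) (y : ℕ → K) (i j : ℕ) :
    ∏ p ∈ stairSet (i + j + 2), stairFactor β (swapVal y i) p =
      stairFactor β y (j, i + 1) *
        ∏ p ∈ (stairSet (i + j + 2)).erase (j, i), stairFactor β y p := by
  simp only [stairFactor_swapVal]
  refine (prod_comp_equiv_eq_mul_prod_erase (mk_mem_stairSet i j)
    ((Equiv.refl ℕ).prodCongr (Equiv.swap i (i + 1))) ?_ (stairFactor β y)).trans ?_
  · rintro ⟨a, b⟩
    simp only [mem_erase, mem_stairSet, ne_eq, Prod.ext_iff, Equiv.prodCongr_apply, Prod.map,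
      Equiv.refl_apply, Equiv.swap_apply_def]
    split_ifs <;> omega
  · simp only [Equiv.prodCongr_apply, Prod.map_apply, Equiv.refl_apply, Equiv.swap_apply_left]

def yDefect (β : K) (G : (ℕ → K) → Equiv.Perm ℕ → MvPolynomial ℕ K) (i : ℕ) (y : ℕ → K)
    (u : Equiv.Perm ℕ) : MvPolynomial ℕ K :=
  C (y i - y (i + 1)) * G y (sTr i * u) + C (1 + β * y i) * G y u
    - C (1 + β * y (i + 1)) * G (swapVal y i) u

variable {β : K} {G : (ℕ → K) → Equiv.Perm ℕ → MvPolynomial ℕ K} {y : ℕ → K}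

lemma yDefect_revPerm (hG : GrothFamily β G) (hy : ∀ j, 1 + β * y j ≠ 0) (i j : ℕ) :
    yDefect β G i y (revPerm (i + j + 2)) = 0 := by
  set Q := ∏ p ∈ (stairSet (i + j + 2)).erase (j, i), stairFactor β y p
  have hw₀ : ∀ y' : ℕ → K, (∀ b, 1 + β * y' b ≠ 0) →
      G y' (revPerm (i + j + 2)) = ∏ p ∈ stairSet (i + j + 2), stairFactor β y' p :=
    fun y' hy' => ((hG y' hy').1 _).trans (prod_stairSet β y' _)
  have hdesc : revPerm (i + j + 2) (j + 1) < revPerm (i + j + 2) j := by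
    simp only [revPerm_apply]
    split_ifs <;> omega
  have E := (hG y hy).2 _ j hdesc
  rw [revPerm_mul_sTr, hw₀ y hy, rename_prod_stairSet,
    ← mul_prod_erase _ _ (mk_mem_stairSet i j)] at E
  refine (mul_eq_zero.mp ?_).resolve_left (X_sub_X_succ_ne_zero j)
  rw [yDefect, hw₀ y hy, hw₀ _ (swapVal_ne_zero hy i), prod_stairSet_swapVal,
    ← mul_prod_erase _ _ (mk_mem_stairSet i j), map_sub]
  linear_combination (C (y i) - C (y (i + 1))) * E
    + Q * (C (y i) - C (y (i + 1))) * demazure_stairFactor (hy i) j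
    + Q * (X j - X (j + 1)) * (C_mul_stairFactor (hy i) j - C_mul_stairFactor (hy (i + 1)) j)

lemma yDefect_eq_zero_of_mul_sTr (hG : GrothFamily β G) (hy : ∀ j, 1 + β * y j ≠ 0)
    {i k : ℕ} {u : Equiv.Perm ℕ} (hasc : u k < u (k + 1))
    (hasc' : (sTr i * u) k < (sTr i * u) (k + 1)) (h : yDefect β G i y (u * sTr k) = 0) :
    yDefect β G i y u = 0 := by
  have hk : ∀ w : Equiv.Perm ℕ, w k < w (k + 1) → (w * sTr k) (k + 1) < (w * sTr k) k := by
    intro w hw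
    simpa [sTr] using hw
  have hss : ∀ w : Equiv.Perm ℕ, w * sTr k * sTr k = w := fun w => by
    rw [mul_assoc, sTr, Equiv.swap_mul_self, mul_one]
  have E₁ := (hG y hy).2 _ k (hk u hasc)
  have E₂ := (hG _ (swapVal_ne_zero hy i)).2 _ k (hk u hasc)
  have E₃ := (hG y hy).2 _ k (hk _ hasc')
  rw [hss] at E₁ E₂ E₃
  rw [mul_assoc] at E₃
  have hx := congrArg (rename (Equiv.swap k (k + 1))) h
  refine (mul_eq_zero.mp ?_).resolve_left (X_sub_X_succ_ne_zero k)
  simp only [yDefect, map_add, map_sub, map_mul, map_one, rename_C, map_zero] at h hx ⊢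
  linear_combination (C (y i) - C (y (i + 1))) * E₃ + (1 + C β * C (y i)) * E₁
    - (1 + C β * C (y (i + 1))) * E₂ + (1 + C β * X (k + 1)) * h - (1 + C β * X k) * hx

lemma yDefect_eq_zero (hG : GrothFamily β G) (hy : ∀ j, 1 + β * y j ≠ 0) {n i : ℕ}
    (hi : i + 1 < n) (u : Equiv.Perm ℕ) (hu : InSn n u) (hui : u⁻¹ (i + 1) < u⁻¹ i) :
    yDefect β G i y u = 0 := by
  obtain ⟨j, rfl⟩ : ∃ j, n = i + j + 2 := ⟨n - i - 2, by omega⟩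
  induction hm : ∑ a ∈ range (i + j + 2), a * u a using Nat.strong_induction_on generalizing u
    with | _ m ih =>
  by_cases hdesc : ∀ a, a + 1 < i + j + 2 → u (a + 1) < u a
  · rw [hu.eq_revPerm_of_forall_descent hdesc]
    exact yDefect_revPerm hG hy i j
  push Not at hdesc
  obtain ⟨k, hk, hle⟩ := hdesc
  have hasc : u k < u (k + 1) := lt_of_le_of_ne hle (u.injective.ne (by omega))
  refine yDefect_eq_zero_of_mul_sTr hG hy hasc (sTr_mul_apply_lt_of_inv_succ_lt_inv hui hasc) ?_
  exact ih _ (hm ▸ sum_mul_apply_mul_sTr_lt hk hasc) _ (inv_succ_lt_inv_mul_sTr hui hasc)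
    (hu.mul (inSn_sTr hk)) rfl

lemma StructConsts.sum_mul_eq_zero
    {c : (ℕ → K) → (ℕ → K) → Equiv.Perm ℕ → Equiv.Perm ℕ → Equiv.Perm ℕ → K}
    (hc : StructConsts β G c) {t : ℕ → K} (ht : ∀ j, 1 + β * t j ≠ 0)
    (hLI : LinearIndependent K fun σ : {σ : Equiv.Perm ℕ // FinPerm σ} => G t σ.1)
    {ι : Type*} (s : Finset ι) (r : ι → K) (y : ι → ℕ → K) (u : ι → Equiv.Perm ℕ)
    (hy : ∀ k, ∀ j, 1 + β * y k j ≠ 0) (hu : ∀ k, FinPerm (u k)) {v : Equiv.Perm ℕ}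
    (hv : FinPerm v) (h : ∑ k ∈ s, C (r k) * G (y k) (u k) = 0) (w : Equiv.Perm ℕ) :
    ∑ k ∈ s, r k * c t (y k) (u k) v w = 0 := by
  choose hfin hzero hexp using fun k => hc t (y k) ht (hy k) (u k) v (hu k) hv
  refine hLI.eq_zero_of_finsum_smul_eq_zero (a := fun σ => ∑ k ∈ s, r k * c t (y k) (u k) v σ)
    ?_ (fun σ hσ => sum_eq_zero fun k _ => ?_) ?_ w
  · refine (s.finite_toSet.biUnion fun k _ => hfin k).subset fun σ hσ => ?_
    obtain ⟨k, hk, hne⟩ := exists_ne_zero_of_sum_ne_zero hσ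
    exact Set.mem_biUnion hk (right_ne_zero_of_mul hne)
  · rw [hzero k σ hσ, mul_zero]
  · calc ∑ᶠ σ, (∑ k ∈ s, r k * c t (y k) (u k) v σ) • G t σ
        = ∑ᶠ σ, ∑ k ∈ s, C (r k) * (C (c t (y k) (u k) v σ) * G t σ) := by
          simp only [smul_eq_C_mul, map_sum, map_mul, sum_mul, mul_assoc]
      _ = ∑ k ∈ s, C (r k) * (G (y k) (u k) * G t v) := by
          rw [finsum_sum_comm]
          · simp only [hexp, mul_finsum]
          · exact fun k _ => (hfin k).subset fun σ hσ hcσ => hσ (by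
              simp only [hcσ, map_zero, zero_mul, mul_zero])
      _ = 0 := by simp only [← mul_assoc, ← sum_mul, h, zero_mul]

end Grothendieck

theorem structure_constant_recurrence_in_u_general
    {K : Type*} [Field K] (β : K)
    (G : (ℕ → K) → Equiv.Perm ℕ → MvPolynomial ℕ K)
    (c : (ℕ → K) → (ℕ → K) → Equiv.Perm ℕ → Equiv.Perm ℕ → Equiv.Perm ℕ → K)
    (hG : GrothFamily β G) (hc : StructConsts β G c)
    (n : ℕ) (u v w : Equiv.Perm ℕ) (hu : InSn n u) (hv : InSn n v)
    (i : ℕ) (hi : i + 1 < n)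
    (hlen : len (sTr i * u) < len u)
    (t y : ℕ → K)
    (ht : ∀ j, 1 + β * t j ≠ 0) (hy : ∀ j, 1 + β * y j ≠ 0)
    (hyy : y i ≠ y (i + 1))
    (hLI : LinearIndependent K fun σ : {σ : Equiv.Perm ℕ // FinPerm σ} => G t σ.1) :
    c t y (sTr i * u) v w =
      -((1 + β * y i) / (y i - y (i + 1))) * c t y u v w
        + ((1 + β * y (i + 1)) / (y i - y (i + 1))) * c t (swapVal y i) u v w := by
  have hrel := yDefect_eq_zero hG hy hi u hu (hu.inv_succ_lt_inv_of_len_sTr_mul_lt hi hlen)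
  have hlin := hc.sum_mul_eq_zero ht hLI univ
    ![y i - y (i + 1), 1 + β * y i, -(1 + β * y (i + 1))] ![y, y, swapVal y i] ![sTr i * u, u, u]
    (by simp [Fin.forall_fin_succ, hy, swapVal_ne_zero hy i])
    (by simp [Fin.forall_fin_succ, hu.finPerm, ((inSn_sTr hi).mul hu).finPerm]) hv.finPerm
    (by simpa only [Fin.sum_univ_three, Matrix.cons_val, map_neg, neg_mul, ← sub_eq_add_neg,
      yDefect] using hrel) w
  simp only [Fin.sum_univ_three, Matrix.cons_val] at hlin
  have hd : y i - y (i + 1) ≠ 0 := sub_ne_zero.mpr hyy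
  field_simp
  linear_combination hlin

/-- Proposition `indonu` of the paper.  Let `u, v, w ∈ S_n` and
let `s_i` be a simple transposition with `ℓ(s_i u) < ℓ(u)`.  Then
`c_{s_i u, v}^w = -((1+βy_i)/(y_i - y_{i+1}))·c_{u,v}^w
  + ((1+βy_{i+1})/(y_i - y_{i+1}))·c_{u,v}^w|_{y_i ↔ y_{i+1}}`. -/
theorem structure_constant_recurrence_in_u
    {K : Type*} [Field K] (β : K)
    (G : (ℕ → K) → Equiv.Perm ℕ → MvPolynomial ℕ K)
    (c : (ℕ → K) → (ℕ → K) → Equiv.Perm ℕ → Equiv.Perm ℕ → Equiv.Perm ℕ → K)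
    (hG : GrothFamily β G) (hc : StructConsts β G c)
    (n : ℕ) (u v w : Equiv.Perm ℕ) (hu : InSn n u) (hv : InSn n v) (hw : InSn n w)
    (i : ℕ) (hi : i + 1 < n)
    (hlen : len (sTr i * u) < len u)
    (t y : ℕ → K)
    (ht : ∀ j, 1 + β * t j ≠ 0) (hy : ∀ j, 1 + β * y j ≠ 0)
    (hyy : y i ≠ y (i + 1))
    (hLI : LinearIndependent K fun σ : {σ : Equiv.Perm ℕ // FinPerm σ} => G t σ.1) :
    c t y (sTr i * u) v w =
      -((1 + β * y i) / (y i - y (i + 1))) * c t y u v w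
        + ((1 + β * y (i + 1)) / (y i - y (i + 1))) * c t (swapVal y i) u v w :=
  structure_constant_recurrence_in_u_general β G c hG hc n u v w hu hv i hi hlen t y ht hy hyy hLI
end BPDPuzzle
end
end

section
/- Let u_0 ∈ S_n be defined by u_0(i)=n+1−i for i≤k and u_0(i)=i−k for k<i≤n, and let v ∈ S_n with mindes(v)≥k. If v ≠ id then PP(u_0,v,id) is empty; and PP(u_0,id,id) contains exactly one pipe puzzle, whose weight is ∏_{i=1}^{k} ∏_{j=1}^{n−i} (t_i ⊖ y_j). Consequently Σ_{π∈PP(u_0,v,id)} wt(π) equals ∏_{i=1}^{k}∏_{j=1}^{n−i}(t_i⊖y_j) if v=id and 0 otherwise. -/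
open MvPolynomial

noncomputable section

namespace BPDPuzzle

/-! Every admissible tile either lets its two pipes pass straight or turns both of them, so its
labels satisfy `{N, E} = {W, S}`. For `u₀` this determines the puzzle row by row from the bottom
boundary `η_id`: left of the first occupied bottom edge a row carries no pipe, since its left edge
is `0`; a pipe entering from the right runs straight until it reaches the column carrying its own
label at the bottom, where it turns down. The forced puzzle does not depend on `v`, and its top
boundary is `θ_id`. Hence `θ_v = θ_id`, so `v` fixes every position beyond `k`; being increasing
on the first `k` positions, `v = id`. The only tiles of weight `≠ 1` in the forced puzzle are the
empty ones, in row `i` and column `j` with `j < k` and `i + j + 1 < n`. -/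

lemma LAdm.pass_or_turn {k N E W S : ℕ} (h : LAdm k N E W S) :
    (N = S ∧ E = W) ∨ (N = W ∧ E = S) := by
  unfold LAdm at h; omega

section Labels

variable {n : ℕ}

/-- The labels `sst.1` read with natural-number indices, with junk value `0` off the grid. -/
def hLab (sst : GridState n) (a b : ℕ) : ℕ :=
  if h : a < n ∧ b < n + 1 then (sst.1 ⟨a, h.1⟩ ⟨b, h.2⟩ : ℕ) else 0

def vLab (sst : GridState n) (a b : ℕ) : ℕ :=
  if h : a < n + 1 ∧ b < n then (sst.2 ⟨a, h.1⟩ ⟨b, h.2⟩ : ℕ) else 0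

lemma hLab_fin (sst : GridState n) (i : Fin n) (j : Fin (n + 1)) :
    hLab sst i j = sst.1 i j := dif_pos ⟨i.isLt, j.isLt⟩

lemma vLab_fin (sst : GridState n) (i : Fin (n + 1)) (j : Fin n) :
    vLab sst i j = sst.2 i j := dif_pos ⟨i.isLt, j.isLt⟩

lemma GridState.ext_of_labels {sst sst' : GridState n}
    (hH : ∀ a < n, ∀ b ≤ n, hLab sst a b = hLab sst' a b)
    (hV : ∀ a ≤ n, ∀ b < n, vLab sst a b = vLab sst' a b) : sst = sst' := by
  refine Prod.ext (funext₂ fun i j => Fin.ext ?_) (funext₂ fun i j => Fin.ext ?_)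
  · rw [← hLab_fin, ← hLab_fin]; exact hH i i.isLt j (Nat.lt_succ_iff.1 j.isLt)
  · rw [← vLab_fin, ← vLab_fin]; exact hV i (Nat.lt_succ_iff.1 i.isLt) j j.isLt

lemma labN_eq (sst : GridState n) (i j : Fin n) : labN sst i j = vLab sst i j :=
  (vLab_fin sst i.castSucc j).symm

lemma labS_eq (sst : GridState n) (i j : Fin n) : labS sst i j = vLab sst (i + 1) j :=
  (vLab_fin sst i.succ j).symm

lemma labW_eq (sst : GridState n) (i j : Fin n) : labW sst i j = hLab sst i j :=
  (hLab_fin sst i j.castSucc).symm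

lemma labE_eq (sst : GridState n) (i j : Fin n) : labE sst i j = hLab sst i (j + 1) :=
  (hLab_fin sst i j.succ).symm

variable {k : ℕ} {u v w : Equiv.Perm ℕ} {sst : GridState n}

lemma PP.pass_or_turn (h : sst ∈ PP n k u v w) {a b : ℕ} (ha : a < n) (hb : b < n) :
    (vLab sst a b = vLab sst (a + 1) b ∧ hLab sst a (b + 1) = hLab sst a b) ∨
    (vLab sst a b = hLab sst a b ∧ hLab sst a (b + 1) = vLab sst (a + 1) b) := by
  simpa only [labN_eq, labE_eq, labW_eq, labS_eq] using LAdm.pass_or_turn (h.2 ⟨a, ha⟩ ⟨b, hb⟩)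

lemma PP.hLab_left (h : sst ∈ PP n k u v w) {a : ℕ} (ha : a < n) : hLab sst a 0 = 0 :=
  (hLab_fin sst ⟨a, ha⟩ 0).trans (h.1.1 ⟨a, ha⟩)

lemma PP.hLab_right (h : sst ∈ PP n k u v w) {a : ℕ} (ha : a < n) :
    hLab sst a n = kappaLab k u a :=
  (hLab_fin sst ⟨a, ha⟩ (Fin.last n)).trans (h.1.2.1 ⟨a, ha⟩)

lemma PP.vLab_top (h : sst ∈ PP n k u v w) {b : ℕ} (hb : b < n) :
    vLab sst 0 b = thetaLab k v b :=
  (vLab_fin sst 0 ⟨b, hb⟩).trans (h.1.2.2.1 ⟨b, hb⟩)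

lemma PP.vLab_bottom (h : sst ∈ PP n k u v w) {b : ℕ} (hb : b < n) :
    vLab sst n b = etaLab w b :=
  (vLab_fin sst (Fin.last n) ⟨b, hb⟩).trans (h.1.2.2.2 ⟨b, hb⟩)

end Labels

section Sweeps

variable {n k : ℕ} {u v w : Equiv.Perm ℕ} {sst : GridState n}

lemma PP.hLab_eq_zero_of_vLab_eq_zero (h : sst ∈ PP n k u v w) {a m : ℕ} (ha : a < n)
    (hm : m ≤ n) (hS : ∀ b < m, vLab sst (a + 1) b = 0) : ∀ b ≤ m, hLab sst a b = 0 := by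
  intro b hb
  induction b with
  | zero => exact PP.hLab_left h ha
  | succ b ih =>
    have := PP.pass_or_turn h ha (show b < n by omega)
    have := ih (by omega)
    have := hS b (by omega)
    omega

lemma PP.hLab_eq_hLab_right (h : sst ∈ PP n k u v w) {a m : ℕ} (ha : a < n)
    (hS : ∀ b, m ≤ b → b < n → vLab sst (a + 1) b ≠ hLab sst a n) :
    ∀ b, m ≤ b → b ≤ n → hLab sst a b = hLab sst a n := by
  intro b hmb hb
  induction hb using Nat.decreasingInduction with
  | self => rfl
  | of_succ b hb ih =>
    rcases PP.pass_or_turn h ha hb with ⟨-, hEW⟩ | ⟨-, hES⟩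
    · rw [← hEW]; exact ih (by omega)
    · exact absurd (hES ▸ ih (by omega)) (hS b hmb hb)

lemma PP.vLab_eq_ite (h : sst ∈ PP n k u v w) {a b : ℕ} (ha : a < n) (hb : b < n) :
    vLab sst a b =
      if hLab sst a (b + 1) = hLab sst a b then vLab sst (a + 1) b else hLab sst a b := by
  rcases PP.pass_or_turn h ha hb with ⟨h1, h2⟩ | ⟨h1, h2⟩ <;> split_ifs <;> omega

end Sweeps

lemma Equiv.Perm.eq_one_of_fixed_of_monotone {v : Equiv.Perm ℕ} {k : ℕ}
    (hfix : ∀ j, k ≤ j → v j = j) (hmono : ∀ i, i + 1 < k → v i ≤ v (i + 1)) : v = 1 := by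
  have hlt : ∀ i < k, v i < k := fun i hi => by
    by_contra! hvi
    have := v.injective (hfix (v i) hvi)
    omega
  have hv : StrictMono v := strictMono_nat_of_lt_succ fun i => by
    rcases lt_or_ge (i + 1) k with hi | hi
    · exact (hmono i hi).lt_of_ne (v.injective.ne (by omega))
    · rw [hfix (i + 1) hi]
      rcases Nat.lt_or_ge i k with hik | hik
      · exact (hlt i hik).trans_le hi
      · rw [hfix i hik]; omega
  have hv' : StrictMono ⇑v⁻¹ := fun a b hab => hv.lt_iff_lt.1 (by simpa using hab)
  ext x
  exact le_antisymm (by simpa using hv'.id_le (v x)) (hv.id_le x)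

def initHLab (n k a b : ℕ) : ℕ := if n ≤ a + k ∧ n ≤ a + b then n - a else 0

def initVLab (n k a b : ℕ) : ℕ := if k ≤ b ∨ n ≤ a + b then b + 1 else 0

/-- With the 1-based labels of the puzzle: for `a ≥ n - k` the pipe `n - a` enters row `a` from
the right and turns down in column `n - a - 1`, and for `b ≥ k` the pipe `b + 1` runs straight
down column `b`. -/
def initPuzzle (n k : ℕ) : GridState n :=
  (fun a b => ⟨initHLab n k a b, by unfold initHLab; split_ifs <;> omega⟩,
   fun a b => ⟨initVLab n k a b, by unfold initVLab; have := b.isLt; split_ifs <;> omega⟩)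

section InitialPuzzle

variable {n k : ℕ}

lemma hLab_initPuzzle {a b : ℕ} (ha : a < n) (hb : b ≤ n) :
    hLab (initPuzzle n k) a b = initHLab n k a b :=
  hLab_fin (initPuzzle n k) ⟨a, ha⟩ ⟨b, by omega⟩

lemma vLab_initPuzzle {a b : ℕ} (ha : a ≤ n) (hb : b < n) :
    vLab (initPuzzle n k) a b = initVLab n k a b :=
  vLab_fin (initPuzzle n k) ⟨a, by omega⟩ ⟨b, hb⟩

variable {u₀ : Equiv.Perm ℕ}
  (hu₀ : ∀ j, u₀ j = if j < k then n - 1 - j else if j < n then j - k else j)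
include hu₀

lemma kappaLab_eq_initHLab (hk : k ≤ n) {a : ℕ} (ha : a < n) :
    kappaLab k u₀ a = initHLab n k a n := by
  have hinv : u₀⁻¹ a = if n ≤ a + k then n - 1 - a else a + k := by
    rw [Equiv.Perm.inv_eq_iff_eq, hu₀]
    split_ifs <;> omega
  unfold kappaLab initHLab
  rw [hinv]
  split_ifs <;> omega

lemma initPuzzle_mem_PP (hk : k ≤ n) : initPuzzle n k ∈ PP n k u₀ 1 1 := by
  refine ⟨⟨fun i => ?_, fun i => ?_, fun j => ?_, fun j => ?_⟩, fun i j => ?_⟩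
  · rw [← hLab_fin, Fin.val_zero, hLab_initPuzzle i.isLt (Nat.zero_le n), initHLab]
    split_ifs <;> omega
  · rw [← hLab_fin, Fin.val_last, hLab_initPuzzle i.isLt le_rfl,
      kappaLab_eq_initHLab hu₀ hk i.isLt]
  · rw [← vLab_fin, Fin.val_zero, vLab_initPuzzle (Nat.zero_le n) j.isLt]
    simp only [thetaLab, initVLab, inv_one, Equiv.Perm.one_apply]
    split_ifs <;> omega
  · rw [← vLab_fin, Fin.val_last, vLab_initPuzzle le_rfl j.isLt]
    simp only [etaLab, initVLab, inv_one, Equiv.Perm.one_apply]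
    split_ifs <;> omega
  · have := i.isLt
    have := j.isLt
    rw [labN_eq, labE_eq, labW_eq, labS_eq, hLab_initPuzzle i.isLt (by omega),
      hLab_initPuzzle i.isLt (by omega), vLab_initPuzzle (by omega) j.isLt,
      vLab_initPuzzle (by omega) j.isLt]
    unfold LAdm initHLab initVLab
    split_ifs <;> omega

end InitialPuzzle

section Forcing

variable {n k : ℕ} {u v w : Equiv.Perm ℕ} {sst : GridState n}

lemma vLab_eq_initVLab_of_row (h : sst ∈ PP n k u v w) {a : ℕ} (ha : a < n)
    (hH : ∀ b ≤ n, hLab sst a b = initHLab n k a b)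
    (hS : ∀ b < n, vLab sst (a + 1) b = initVLab n k (a + 1) b) :
    ∀ b < n, vLab sst a b = initVLab n k a b := by
  intro b hb
  rw [PP.vLab_eq_ite h ha hb, hH b hb.le, hH (b + 1) hb, hS b hb]
  unfold initHLab initVLab
  split_ifs <;> omega

variable {u₀ : Equiv.Perm ℕ}
  (hu₀ : ∀ j, u₀ j = if j < k then n - 1 - j else if j < n then j - k else j) (hk : k ≤ n)
include hu₀ hk

lemma hLab_eq_initHLab_of_south (h : sst ∈ PP n k u₀ v w) {a : ℕ} (ha : a < n)
    (hS : ∀ b < n, vLab sst (a + 1) b = initVLab n k (a + 1) b) :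
    ∀ b ≤ n, hLab sst a b = initHLab n k a b := by
  intro b hb
  have hright : hLab sst a n = initHLab n k a n :=
    (PP.hLab_right h ha).trans (kappaLab_eq_initHLab hu₀ hk ha)
  -- `m` is the column where the pipe entering row `a` turns down, or `k` if there is none
  set m := min k (n - 1 - a)
  rcases le_or_gt b m with hbm | hbm
  · have hzero : ∀ b' < m, vLab sst (a + 1) b' = 0 := fun b' hb' => by
      rw [hS b' (by omega), initVLab]
      split_ifs <;> omega
    rw [PP.hLab_eq_zero_of_vLab_eq_zero h ha (by omega) hzero b hbm, initHLab]
    split_ifs <;> omega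
  · have hne : ∀ b', m + 1 ≤ b' → b' < n → vLab sst (a + 1) b' ≠ hLab sst a n :=
      fun b' hb' hb'n => by
        rw [hS b' hb'n, hright, initVLab, initHLab]
        split_ifs <;> omega
    rw [PP.hLab_eq_hLab_right h ha hne b hbm hb, hright, initHLab, initHLab]
    split_ifs <;> omega

lemma vLab_eq_initVLab (h : sst ∈ PP n k u₀ v 1) {a : ℕ} (ha : a ≤ n) :
    ∀ b < n, vLab sst a b = initVLab n k a b := by
  induction ha using Nat.decreasingInduction with
  | self =>
    intro b hb
    rw [PP.vLab_bottom h hb, etaLab, initVLab, if_pos (by omega)]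
    rfl
  | of_succ a ha ih =>
    exact vLab_eq_initVLab_of_row h ha (hLab_eq_initHLab_of_south hu₀ hk h ha ih) ih

lemma eq_initPuzzle_of_mem_PP (h : sst ∈ PP n k u₀ v 1) : sst = initPuzzle n k := by
  have hV := fun a (ha : a ≤ n) => vLab_eq_initVLab hu₀ hk h ha
  refine GridState.ext_of_labels (fun a ha b hb => ?_) (fun a ha b hb => ?_)
  · rw [hLab_initPuzzle ha hb]
    exact hLab_eq_initHLab_of_south hu₀ hk h ha (hV (a + 1) ha) b hb
  · rw [vLab_initPuzzle ha hb]
    exact hV a ha b hb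

lemma eq_one_of_mem_PP (h : sst ∈ PP n k u₀ v 1) (hv : InSn n v)
    (hvdes : ∀ i, i + 1 < k → v i ≤ v (i + 1)) : v = 1 := by
  refine Equiv.Perm.eq_one_of_fixed_of_monotone (fun j hj => ?_) hvdes
  rcases le_or_gt n j with hnj | hjn
  · exact hv j hnj
  · have htop := (PP.vLab_top h hjn).symm.trans (vLab_eq_initVLab hu₀ hk h (Nat.zero_le n) j hjn)
    rw [thetaLab, initVLab, if_pos (Or.inl hj)] at htop
    split_ifs at htop
    exact (Equiv.Perm.inv_eq_iff_eq.1 (by omega)).symm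

end Forcing

section Weights

variable {K : Type*} [Field K] (β x : K) (k : ℕ) {N E W S : ℕ}

lemma Lwt_empty : Lwt β k x 0 0 0 0 = x := if_pos ⟨rfl, rfl, rfl, rfl⟩

lemma Lwt_of_pass (hNS : N = S) (hEW : E = W) (hEN : E < N) : Lwt β k x N E W S = 1 := by
  subst hNS hEW
  rcases Nat.eq_zero_or_pos E with rfl | hE
  · simp [Lwt, hEN.ne', hEN]
  · simp [Lwt, hE.ne', hEN, hE]

lemma Lwt_of_elbow_from_right (hN : N = 0) (hW : W = 0) (hE : 0 < E) (hES : E = S)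
    (hEk : E ≤ k) : Lwt β k x N E W S = 1 := by
  subst hN hW hES
  simp [Lwt, hE.ne', hE, hEk]

end Weights

lemma Lwt_initPuzzle {K : Type*} [Field K] (β x : K) {n k i j : ℕ} :
    Lwt β k x (initVLab n k i j) (initHLab n k i (j + 1)) (initHLab n k i j)
        (initVLab n k (i + 1) j) = if j < k ∧ i + j + 1 < n then x else 1 := by
  generalize hN : initVLab n k i j = N
  generalize hE : initHLab n k i (j + 1) = E
  generalize hW : initHLab n k i j = W
  generalize hS : initVLab n k (i + 1) j = S
  rw [initVLab] at hN hS
  rw [initHLab] at hE hW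
  split_ifs with hc
  · obtain ⟨rfl, rfl, rfl, rfl⟩ : N = 0 ∧ E = 0 ∧ W = 0 ∧ S = 0 := by
      split_ifs at hN hE hW hS <;> omega
    exact Lwt_empty β x k
  · have : (N = S ∧ E = W ∧ E < N) ∨ (N = 0 ∧ W = 0 ∧ 0 < E ∧ E = S ∧ E ≤ k) := by
      split_ifs at hN hE hW hS <;> omega
    rcases this with ⟨hNS, hEW, hEN⟩ | ⟨hN0, hW0, hE0, hES, hEk⟩
    · exact Lwt_of_pass β x k hNS hEW hEN
    · exact Lwt_of_elbow_from_right β x k hN0 hW0 hE0 hES hEk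

lemma prod_range_ite_lt {M : Type*} [CommMonoid M] {m N : ℕ} (h : m ≤ N) (f : ℕ → M) :
    ∏ a ∈ Finset.range N, (if a < m then f a else 1) = ∏ a ∈ Finset.range m, f a := by
  rw [← Finset.prod_subset (Finset.range_subset_range.2 h)
    (fun a _ ha => if_neg (by simpa using ha))]
  exact Finset.prod_congr rfl fun a ha => if_pos (Finset.mem_range.1 ha)

lemma prod_fin_ite_staircase {M : Type*} [CommMonoid M] {n k : ℕ} (hk : k ≤ n)
    (f : ℕ → ℕ → M) :
    ∏ i : Fin n, ∏ j : Fin n, (if (j : ℕ) < k ∧ (i : ℕ) + j + 1 < n then f i j else 1) =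
      ∏ j ∈ Finset.range k, ∏ i ∈ Finset.range (n - 1 - j), f i j := by
  rw [Finset.prod_comm, ← prod_range_ite_lt hk, ← Fin.prod_univ_eq_prod_range]
  refine Finset.prod_congr rfl fun j _ => ?_
  split_ifs with hj
  · rw [← prod_range_ite_lt (by omega : n - 1 - j ≤ n), ← Fin.prod_univ_eq_prod_range]
    exact Finset.prod_congr rfl fun i _ => if_congr (by omega) rfl rfl
  · exact Finset.prod_eq_one fun i _ => if_neg fun hij => hj hij.1

lemma stateWt_initPuzzle {K : Type*} [Field K] (β : K) {n k : ℕ} (hk : k ≤ n) (t y : ℕ → K) :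
    stateWt β k t y (initPuzzle n k) =
      ∏ i ∈ Finset.range k, ∏ j ∈ Finset.range (n - 1 - i), ominus β (t i) (y j) := by
  have hlab : ∀ i j : Fin n, Lwt β k (ominus β (t j) (y i)) (labN (initPuzzle n k) i j)
      (labE (initPuzzle n k) i j) (labW (initPuzzle n k) i j) (labS (initPuzzle n k) i j) =
        if (j : ℕ) < k ∧ (i : ℕ) + j + 1 < n then ominus β (t j) (y i) else 1 := fun i j => by
    rw [labN_eq, labE_eq, labW_eq, labS_eq, hLab_initPuzzle (b := j + 1) i.isLt j.isLt,
      hLab_initPuzzle i.isLt j.isLt.le, vLab_initPuzzle i.isLt.le j.isLt,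
      vLab_initPuzzle (a := i + 1) i.isLt j.isLt, Lwt_initPuzzle]
  simp only [stateWt, hlab]
  exact prod_fin_ite_staircase hk fun i j => ominus β (t j) (y i)

/-- Theorem `thm:initial` of the paper.  Let `u₀ ∈ S_n` be
given by `u₀(i) = n+1-i` for `i ≤ k` and `u₀(i) = i-k` for `k < i ≤ n` (1-based;
below in 0-based form), and let `v ∈ S_n` with `mindes(v) ≥ k`.  If `v ≠ id`
then `PP(u₀, v, id)` is empty; `PP(u₀, id, id)` contains exactly one pipe
puzzle, whose weight is `∏_{i=1}^{k} ∏_{j=1}^{n-i} (t_i ⊖ y_j)`; and consequently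
`Σ_{π ∈ PP(u₀,v,id)} wt(π)` equals this product if `v = id` and `0` otherwise. -/
theorem pipe_puzzle_initial_condition
    {K : Type*} [Field K] (β : K)
    (n k : ℕ) (hk : k ≤ n)
    (u₀ : Equiv.Perm ℕ)
    (hu₀ : ∀ j, u₀ j = if j < k then n - 1 - j else if j < n then j - k else j)
    (v : Equiv.Perm ℕ) (hv : InSn n v)
    (hvdes : ∀ i, i + 1 < k → v i ≤ v (i + 1))
    (t y : ℕ → K) :
    (v ≠ 1 → PP n k u₀ v 1 = (∅ : Set (GridState n))) ∧
    (∃! π : GridState n, π ∈ PP n k u₀ 1 1) ∧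
    (∀ π ∈ PP n k u₀ 1 1,
      stateWt β k t y π =
        ∏ i ∈ Finset.range k, ∏ j ∈ Finset.range (n - 1 - i), ominus β (t i) (y j)) ∧
    ((v = 1 → (∑ᶠ π ∈ PP n k u₀ v 1, stateWt β k t y π) =
        ∏ i ∈ Finset.range k, ∏ j ∈ Finset.range (n - 1 - i), ominus β (t i) (y j)) ∧
     (v ≠ 1 → (∑ᶠ π ∈ PP n k u₀ v 1, stateWt β k t y π) = 0)) := by
  have hPP_one : PP n k u₀ 1 1 = {initPuzzle n k} :=
    Set.eq_singleton_iff_unique_mem.2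
      ⟨initPuzzle_mem_PP hu₀ hk, fun π hπ => eq_initPuzzle_of_mem_PP hu₀ hk hπ⟩
  have hPP_ne_one : v ≠ 1 → PP n k u₀ v 1 = ∅ := fun hv1 =>
    Set.eq_empty_of_forall_notMem fun π hπ => hv1 (eq_one_of_mem_PP hu₀ hk hπ hv hvdes)
  refine ⟨hPP_ne_one, ?_, fun π hπ => ?_, fun hv1 => ?_, fun hv1 => ?_⟩
  · rw [hPP_one]
    exact ⟨initPuzzle n k, rfl, fun _ h => h⟩
  · rw [hPP_one, Set.mem_singleton_iff] at hπ
    rw [hπ, stateWt_initPuzzle β hk t y]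
  · rw [hv1, hPP_one, finsum_mem_singleton, stateWt_initPuzzle β hk t y]
  · rw [hPP_ne_one hv1, finsum_mem_empty]
end BPDPuzzle
end
end
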